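/- arXiv:1102.1373 — 4 statements merged into one kernel-verified Lean document; each statement's English description precedes it below -/
import Mathlib

section
/- Let A be a unital alternative ring. Then the set U(A) of invertible elements of A (elements a for which there exists b with ab = ba = 1) forms a Moufang loop under the multiplication of A. -/
set_option linter.unusedSectionVars false

namespace Paper

/-- The Moufang-loop axioms for an explicit multiplication `mul` with identity `e`:
`e` is a two-sided identity, all left and right translations are bijective
(equivalently, the equations `a * x = b` and `y * a = b` are uniquely solvable),
and the Moufang identity `((x y) x) z = x (y (x z))` holds. -/
structure IsMoufangLoopOn {Q : Type*} (mul : Q → Q → Q) (e : Q) : Prop where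
  one_mul : ∀ a, mul e a = a
  mul_one : ∀ a, mul a e = a
  mulLeft_bijective : ∀ a, Function.Bijective (mul a)
  mulRight_bijective : ∀ a, Function.Bijective (fun x => mul x a)
  moufang : ∀ x y z, mul (mul (mul x y) x) z = mul x (mul y (mul x z))

/-- `U(A)`: the elements of a unital (not necessarily associative) ring having
a two-sided multiplicative inverse. -/
def U (A : Type*) [NonAssocRing A] : Type _ := {a : A // ∃ b : A, a * b = 1 ∧ b * a = 1}

private def asc {A : Type*} [NonAssocRing A] (a b c : A) : A := a*b*c - a*(b*c)

section
variable {A : Type*} [NonAssocRing A]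

private lemma asc_aa (hL : ∀ x y : A, x * (x * y) = (x * x) * y) (x y : A) : asc x x y = 0 := by
  simp [asc, hL x y]

private lemma asc_bb (hR : ∀ x y : A, (y * x) * x = y * (x * x)) (x y : A) : asc x y y = 0 := by
  simp [asc, hR y x]

private lemma asc_swap₁ (hL : ∀ x y : A, x * (x * y) = (x * x) * y) (x y z : A) :
    asc y x z = -asc x y z := by
  have h := asc_aa hL (x+y) z
  have e : asc (x+y) (x+y) z = asc x x z + asc y y z + (asc x y z + asc y x z) := by
    simp only [asc, add_mul, mul_add]; abel
  rw [e, asc_aa hL, asc_aa hL, zero_add, zero_add] at h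
  exact eq_neg_of_add_eq_zero_right h

private lemma asc_swap₂ (hR : ∀ x y : A, (y * x) * x = y * (x * x)) (x y z : A) :
    asc x z y = -asc x y z := by
  have h := asc_bb hR x (y+z)
  have e : asc x (y+z) (y+z) = asc x y y + asc x z z + (asc x y z + asc x z y) := by
    simp only [asc, add_mul, mul_add]; abel
  rw [e, asc_bb hR, asc_bb hR, zero_add, zero_add] at h
  exact eq_neg_of_add_eq_zero_right h

private lemma asc_flex (hL : ∀ x y : A, x * (x * y) = (x * x) * y)
    (hR : ∀ x y : A, (y * x) * x = y * (x * x)) (x y : A) : asc x y x = 0 := by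
  rw [asc_swap₁ hL, asc_bb hR, neg_zero]

private lemma asc_rot (hL : ∀ x y : A, x * (x * y) = (x * x) * y)
    (hR : ∀ x y : A, (y * x) * x = y * (x * x)) (x y z : A) : asc y z x = asc x y z := by
  rw [asc_swap₂ hR, asc_swap₁ hL, neg_neg]

private lemma teich (a b c d : A) :
    asc (a*b) c d - asc a (b*c) d + asc a b (c*d) = a * asc b c d + asc a b c * d := by
  simp only [asc, mul_sub, sub_mul]; abel


variable (hL : ∀ x y : A, x * (x * y) = (x * x) * y)
variable (hR : ∀ x y : A, (y * x) * x = y * (x * x))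
include hL hR

private lemma key7 (x y z : A) :
    asc (x*y) x z = x * asc x y z - asc (x*x) y z := by
  have t := teich x x y z
  rw [asc_aa hL, asc_aa hL] at t
  rw [show asc x (x*y) z = -asc (x*y) x z from asc_swap₁ hL (x*y) x z] at t
  simp only [sub_neg_eq_add, add_zero, zero_mul] at t
  rw [eq_sub_iff_add_eq]
  exact (add_comm _ _).trans t

private lemma key8 (x y z : A) :
    asc x y (x*z) = asc (x*x) y z - x * asc x y z := by
  have t := teich x x z y
  rw [asc_aa hL, asc_aa hL] at t
  rw [show asc (x*x) z y = -asc (x*x) y z from asc_swap₂ hR (x*x) y z,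
      show asc x (x*z) y = -asc x y (x*z) from asc_swap₂ hR x y (x*z),
      show asc x z y = -asc x y z from asc_swap₂ hR x y z] at t
  simp only [sub_neg_eq_add, add_zero, zero_mul, mul_neg] at t
  rw [neg_add_eq_sub, sub_eq_iff_eq_add] at t
  rw [t, neg_add_eq_sub]

private lemma moufang_left (x y z : A) : x*y*x*z = x*(y*(x*z)) := by
  have key : x*y*x*z - x*(y*(x*z)) = asc (x*y) x z + asc x y (x*z) := by
    simp only [asc]; abel
  rw [key7 hL hR, key8 hL hR] at key
  have : x*y*x*z - x*(y*(x*z)) = 0 := by rw [key]; abel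
  exact sub_eq_zero.mp this

private lemma keyD (x y z : A) : asc x y (z*x) = x * asc x y z := by
  have t := teich x z x y
  rw [show asc (x*z) x y = asc x y (x*z) by
        rw [asc_swap₁ hL, asc_swap₂ hR, neg_neg],
      show asc x z (x*y) = asc (x*y) x z by
        rw [asc_swap₂ hR, asc_swap₁ hL, neg_neg],
      show asc z x y = asc x y z from
        (asc_rot hL hR y z x).trans (asc_rot hL hR x y z),
      asc_flex hL hR x z,
      show asc x (z*x) y = -asc x y (z*x) from asc_swap₂ hR x y (z*x),
      key7 hL hR, key8 hL hR] at t
  simp only [sub_neg_eq_add, zero_mul, add_zero] at t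
  rw [← t]; abel

private lemma keyE (x y z : A) :
    asc (x*x) y z = x * asc x y z + asc x y z * x := by
  have t := teich x y z x
  rw [asc_flex hL hR x (y*z),
      show asc (x*y) z x = -asc (x*y) x z from asc_swap₂ hR (x*y) x z,
      show asc y z x = asc x y z from asc_rot hL hR x y z,
      keyD hL hR, key7 hL hR] at t
  rw [← t]; abel

private lemma moufang_mid (x y z : A) : (x*(y*z))*x = (x*y)*(z*x) := by
  have key : (x*(y*z))*x - (x*y)*(z*x)
      = asc x (y*z) x + (x * asc y z x - asc x y (z*x)) := by
    simp only [asc, mul_sub]; abel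
  rw [asc_flex hL hR, show asc y z x = asc x y z from asc_rot hL hR x y z,
      keyD hL hR] at key
  have : (x*(y*z))*x - (x*y)*(z*x) = 0 := by rw [key]; abel
  exact sub_eq_zero.mp this

private lemma moufang_mid' (x y z : A) : x*((y*z)*x) = (x*y)*(z*x) := by
  have fl := asc_flex hL hR x (y*z)
  simp only [asc, sub_eq_zero] at fl
  rw [← fl]
  exact moufang_mid hL hR x y z

private lemma keyZ (x y z : A) : asc z (y*x) x = -(x * asc x y z) := by
  have t := teich z y x x
  rw [asc_bb hR (z*y) x, asc_bb hR y x,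
      show asc z y (x*x) = -asc (x*x) y z by
        rw [asc_swap₁ hL, asc_rot hL hR (x*x) y z],
      show asc z y x = -asc x y z by
        rw [asc_swap₁ hL y z x, asc_rot hL hR x y z],
      keyE hL hR] at t
  simp only [zero_sub, mul_zero, zero_add, neg_mul] at t
  linear_combination (norm := abel) -t

private lemma moufang_right (x y z : A) : z*x*y*x = z*(x*(y*x)) := by
  have key : z*x*y*x - z*(x*(y*x)) = asc (z*x) y x + asc z x (y*x) := by
    simp only [asc]; abel
  rw [show asc (z*x) y x = -(x * asc x y z) by
        rw [asc_swap₂ hR (z*x) x y, asc_swap₁ hL x (z*x) y,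
            asc_swap₂ hR x y (z*x), keyD hL hR, neg_neg],
      show asc z x (y*x) = x * asc x y z by
        rw [show asc z x (y*x) = -asc z (y*x) x from
              (neg_eq_iff_eq_neg.mpr (asc_swap₂ hR z x (y*x))).symm,
            keyZ hL hR, neg_neg]] at key
  have : z*x*y*x - z*(x*(y*x)) = 0 := by rw [key]; abel
  exact sub_eq_zero.mp this


private lemma linj {a b u : A} (h1 : a*b = 1) (h2 : b*a = 1) (hu : a*u = 0) : u = 0 := by
  have e1 : asc b a u = u := by simp [asc, h2, hu]
  have e2 : a*(u*b) = -u := by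
    have r : asc a u b = asc b a u := asc_rot hL hR b a u
    rw [e1] at r
    have r' : a*u*b - a*(u*b) = u := r
    rw [hu, zero_mul, zero_sub] at r'
    exact neg_eq_iff_eq_neg.mp r'
  have hbba : b*b*a = b := by rw [← hL b a, h2, mul_one]
  have e3 : asc (b*b) a u = b*u := by simp [asc, hbba, hu]
  have e4 := keyE hL hR b a u
  rw [e1, e3] at e4
  have e5 : u*b = 0 := left_eq_add.mp e4
  rw [e5, mul_zero] at e2
  exact neg_eq_zero.mp e2.symm

private lemma lip {a b : A} (h1 : a*b = 1) (h2 : b*a = 1) (z : A) : b*(a*z) = z := by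
  have m := moufang_left hL hR a b z
  rw [h1, one_mul] at m
  have h4 : a*(b*(a*z) - z) = 0 := by rw [mul_sub, ← m, sub_self]
  exact sub_eq_zero.mp (linj hL hR h1 h2 h4)

private lemma rinj {a b u : A} (h1 : a*b = 1) (h2 : b*a = 1) (hu : u*a = 0) : u = 0 := by
  have e1 : asc u a b = -u := by simp [asc, hu, h1]
  have r : asc u a b = asc b u a := asc_rot hL hR b u a
  have e2 : (b*u)*a = -u := by
    have r' := r.symm.trans e1
    have r'' : b*u*a - b*(u*a) = -u := r'
    rw [hu, mul_zero, sub_zero] at r''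
    exact r''
  have m := moufang_mid' hL hR a b u
  rw [e2, h1, hu, mul_zero, mul_neg, neg_eq_zero] at m
  exact linj hL hR h1 h2 m

private lemma rip {a b : A} (h1 : a*b = 1) (h2 : b*a = 1) (z : A) : z*a*b = z := by
  have m := moufang_right hL hR a b z
  rw [h2, mul_one] at m
  have h4 : (z*a*b - z)*a = 0 := by rw [sub_mul, m, sub_self]
  exact sub_eq_zero.mp (rinj hL hR h1 h2 h4)

private lemma unit_mul {a b c d : A} (hab : a*b = 1) (hba : b*a = 1)
    (hcd : c*d = 1) (hdc : d*c = 1) :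
    ∃ r, (a*c)*r = 1 ∧ r*(a*c) = 1 := by
  have hct : c*(d*(b*b)) = b*b := lip hL hR hdc hcd (b*b)
  have habb : a*(b*b) = b := lip hL hR hba hab b
  set t := d*(b*b) with ht
  have key1 : (a*c)*(t*a) = 1 := by
    have m := moufang_mid hL hR a c t
    rw [hct, habb, hba] at m
    exact m.symm
  have inj : ∀ s : A, (a*c)*s = 0 → s = 0 := by
    intro s hs
    have hsba : s*b*a = s := rip hL hR hba hab s
    have m := moufang_mid hL hR a c (s*b)
    rw [hsba, hs] at m
    have z1 : a*(c*(s*b)) = 0 := rinj hL hR hab hba m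
    have z2 : c*(s*b) = 0 := linj hL hR hab hba z1
    have z3 : s*b = 0 := linj hL hR hcd hdc z2
    exact rinj hL hR hba hab z3
  have key2 : (t*a)*(a*c) = 1 := by
    have fl := asc_flex hL hR (a*c) (t*a)
    simp only [asc, sub_eq_zero] at fl
    rw [key1, one_mul] at fl
    have h5 : (a*c)*((t*a)*(a*c) - 1) = 0 := by rw [mul_sub, ← fl, mul_one, sub_self]
    exact sub_eq_zero.mp (inj _ h5)
  exact ⟨t*a, key1, key2⟩


end

/-- in a unital alternative ring the invertible elements form a
Moufang loop under the ring multiplication. -/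
theorem units_of_alternative_isMoufangLoop (A : Type*) [NonAssocRing A]
    (alt_left : ∀ x y : A, x * (x * y) = (x * x) * y)
    (alt_right : ∀ x y : A, (y * x) * x = y * (x * x)) :
    ∃ mul : U A → U A → U A,
      (∀ a b : U A, (mul a b).1 = a.1 * b.1) ∧
      IsMoufangLoopOn mul ⟨(1 : A), (1 : A), one_mul 1, one_mul 1⟩ := by
  have closure : ∀ a c : U A, ∃ r : A, (a.1*c.1)*r = 1 ∧ r*(a.1*c.1) = 1 := by
    rintro ⟨a, b, hab, hba⟩ ⟨c, d, hcd, hdc⟩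
    exact unit_mul alt_left alt_right hab hba hcd hdc
  refine ⟨fun a c => ⟨a.1*c.1, closure a c⟩, fun a c => rfl, ?_, ?_, ?_, ?_, ?_⟩
  · intro a; exact Subtype.ext (one_mul a.1)
  · intro a; exact Subtype.ext (mul_one a.1)
  · rintro ⟨a, b, hab, hba⟩
    constructor
    · rintro ⟨x, hx⟩ ⟨y, hy⟩ h
      have h' : a*x = a*y := congrArg Subtype.val h
      have : x = y := by
        calc x = b*(a*x) := (lip alt_left alt_right hab hba x).symm
        _ = b*(a*y) := by rw [h']
        _ = y := lip alt_left alt_right hab hba y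
      exact Subtype.ext this
    · rintro ⟨t, t', ht1, ht2⟩
      refine ⟨⟨b*t, unit_mul alt_left alt_right hba hab ht1 ht2⟩, ?_⟩
      exact Subtype.ext (lip alt_left alt_right hba hab t)
  · rintro ⟨a, b, hab, hba⟩
    constructor
    · rintro ⟨x, hx⟩ ⟨y, hy⟩ h
      have h' : x*a = y*a := congrArg Subtype.val h
      have : x = y := by
        calc x = x*a*b := (rip alt_left alt_right hab hba x).symm
        _ = y*a*b := by rw [h']
        _ = y := rip alt_left alt_right hab hba y
      exact Subtype.ext this
    · rintro ⟨t, t', ht1, ht2⟩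
      refine ⟨⟨t*b, unit_mul alt_left alt_right ht1 ht2 hba hab⟩, ?_⟩
      exact Subtype.ext (rip alt_left alt_right hba hab t)
  · intro x y z
    exact Subtype.ext (moufang_left alt_left alt_right x.1 y.1 z.1)

end Paper
end

section
/- Let F be the field with 5 elements. Then the centre Z = {1, −1} of the Moufang loop M*(F) has no direct complement: there is no normal subloop H of M*(F) with H ∩ Z = {1} and Z·H = M*(F). -/
namespace Paper

/-- Dot product on `F³`. -/
def dot3 {F : Type*} [Field F] (x y : Fin 3 → F) : F :=
  x 0 * y 0 + x 1 * y 1 + x 2 * y 2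

/-- Cross product on `F³`. -/
def cross3 {F : Type*} [Field F] (x y : Fin 3 → F) : Fin 3 → F :=
  ![x 1 * y 2 - x 2 * y 1, x 2 * y 0 - x 0 * y 2, x 0 * y 1 - x 1 * y 0]

/-- The Zorn vector matrix algebra (matrix Cayley–Dickson / split octonion algebra)
`C(F)`: matrices `(α₁, α₁₂; α₂₁, α₂)` with `α₁, α₂ ∈ F`, `α₁₂, α₂₁ ∈ F³`. -/
@[ext]
structure Zorn (F : Type*) [Field F] where
  a : F
  u : Fin 3 → F
  v : Fin 3 → F
  d : F

namespace Zorn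

variable {F : Type*} [Field F]

instance : One (Zorn F) := ⟨⟨1, 0, 0, 1⟩⟩

instance : Neg (Zorn F) := ⟨fun x => ⟨-x.a, -x.u, -x.v, -x.d⟩⟩

/-- Zorn's multiplication rule. -/
instance : Mul (Zorn F) :=
  ⟨fun x y =>
    ⟨x.a * y.a + dot3 x.u y.v,
     fun i => x.a * y.u i + y.d * x.u i - cross3 x.v y.v i,
     fun i => y.a * x.v i + x.d * y.v i + cross3 x.u y.u i,
     x.d * y.d + dot3 x.v y.u⟩⟩

@[simp] theorem one_a : (1 : Zorn F).a = 1 := rfl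
@[simp] theorem one_u : (1 : Zorn F).u = 0 := rfl
@[simp] theorem one_v : (1 : Zorn F).v = 0 := rfl
@[simp] theorem one_d : (1 : Zorn F).d = 1 := rfl
@[simp] theorem neg_a (x : Zorn F) : (-x).a = -x.a := rfl
@[simp] theorem neg_u (x : Zorn F) : (-x).u = -x.u := rfl
@[simp] theorem neg_v (x : Zorn F) : (-x).v = -x.v := rfl
@[simp] theorem neg_d (x : Zorn F) : (-x).d = -x.d := rfl
@[simp] theorem mul_a (x y : Zorn F) : (x * y).a = x.a * y.a + dot3 x.u y.v := rfl
@[simp] theorem mul_u (x y : Zorn F) :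
    (x * y).u = fun i => x.a * y.u i + y.d * x.u i - cross3 x.v y.v i := rfl
@[simp] theorem mul_v (x y : Zorn F) :
    (x * y).v = fun i => y.a * x.v i + x.d * y.v i + cross3 x.u y.u i := rfl
@[simp] theorem mul_d (x y : Zorn F) : (x * y).d = x.d * y.d + dot3 x.v y.u := rfl

/-- The norm `n(a) = α₁α₂ − ⟨α₁₂, α₂₁⟩`. -/
def norm (x : Zorn F) : F := x.a * x.d - dot3 x.u x.v

theorem norm_one : norm (1 : Zorn F) = 1 := by
  simp [norm, dot3]

theorem norm_neg (x : Zorn F) : norm (-x) = norm x := by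
  simp only [norm, neg_a, neg_u, neg_v, neg_d, dot3, Pi.neg_apply]
  ring

theorem norm_mul (x y : Zorn F) : norm (x * y) = norm x * norm y := by
  simp only [norm, mul_a, mul_u, mul_v, mul_d, dot3, cross3]
  simp only [Matrix.cons_val_zero, Matrix.cons_val_one, Matrix.head_cons,
    Matrix.cons_val_two, Matrix.tail_cons]
  ring

theorem neg_neg' (x : Zorn F) : -(-x) = x := by
  ext <;> simp

theorem neg_mul' (x y : Zorn F) : (-x) * y = -(x * y) := by
  refine Zorn.ext ?_ ?_ ?_ ?_
  · simp [dot3]; ring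
  · funext i
    simp [cross3]
    fin_cases i <;> simp <;> ring
  · funext i
    simp [cross3]
    fin_cases i <;> simp <;> ring
  · simp [dot3]; ring

theorem mul_neg' (x y : Zorn F) : x * (-y) = -(x * y) := by
  refine Zorn.ext ?_ ?_ ?_ ?_
  · simp [dot3]; ring
  · funext i
    simp [cross3]
    fin_cases i <;> simp <;> ring
  · funext i
    simp [cross3]
    fin_cases i <;> simp <;> ring
  · simp [dot3]; ring

end Zorn

/-- `M*(F)`: the elements of norm `1` in the Zorn vector matrix algebra. -/
def Mstar (F : Type*) [Field F] : Type _ := {x : Zorn F // Zorn.norm x = 1}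

namespace Mstar

variable {F : Type*} [Field F]

instance : One (Mstar F) := ⟨⟨1, Zorn.norm_one⟩⟩

instance : Neg (Mstar F) := ⟨fun x => ⟨-x.1, by rw [Zorn.norm_neg, x.2]⟩⟩

instance : Mul (Mstar F) :=
  ⟨fun x y => ⟨x.1 * y.1, by rw [Zorn.norm_mul, x.2, y.2, one_mul]⟩⟩

@[simp] theorem coe_mul (x y : Mstar F) : (x * y).1 = x.1 * y.1 := rfl
@[simp] theorem coe_neg (x : Mstar F) : (-x).1 = -x.1 := rfl
@[simp] theorem coe_one : (1 : Mstar F).1 = 1 := rfl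

/-- Identification of `x` and `-x`. -/
instance setoid (F : Type*) [Field F] : Setoid (Mstar F) where
  r x y := x.1 = y.1 ∨ x.1 = -y.1
  iseqv := by
    refine ⟨fun x => Or.inl rfl, ?_, ?_⟩
    · rintro x y (h | h)
      · exact Or.inl h.symm
      · exact Or.inr (by rw [h, Zorn.neg_neg'])
    · rintro x y z (h1 | h1) (h2 | h2)
      · exact Or.inl (h1.trans h2)
      · exact Or.inr (h1.trans h2)
      · exact Or.inr (by rw [h1, h2])
      · exact Or.inl (by rw [h1, h2, Zorn.neg_neg'])

end Mstar

/-- The Paige loop `M(F) = M*(F)/{±1}`. -/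
abbrev Paige (F : Type*) [Field F] := Quotient (Mstar.setoid F)

namespace Paige

variable {F : Type*} [Field F]

instance : One (Paige F) := ⟨⟦1⟧⟩

instance : Mul (Paige F) :=
  ⟨Quotient.map₂ (· * ·) (by
    rintro a b (hab | hab) c d (hcd | hcd)
    · exact Or.inl (by simp [hab, hcd])
    · exact Or.inr (by simp [hab, hcd, Zorn.mul_neg'])
    · exact Or.inr (by simp [hab, hcd, Zorn.neg_mul'])
    · exact Or.inl (by
        simp [hab, hcd, Zorn.neg_mul', Zorn.mul_neg', Zorn.neg_neg']))⟩

end Paige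

section LoopDefs

variable {Q : Type*} [Mul Q] [One Q]

/-- `Q` (with its multiplication and identity) is a Moufang loop. -/
structure IsMoufangLoop (Q : Type*) [Mul Q] [One Q] : Prop where
  one_mul : ∀ a : Q, 1 * a = a
  mul_one : ∀ a : Q, a * 1 = a
  mulLeft_bijective : ∀ a : Q, Function.Bijective (fun x : Q => a * x)
  mulRight_bijective : ∀ a : Q, Function.Bijective (fun x : Q => x * a)
  moufang : ∀ x y z : Q, ((x * y) * x) * z = x * (y * (x * z))

/-- A subloop: contains `1`, closed under multiplication and two-sided inverses. -/
def IsSubloop (S : Set Q) : Prop :=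
  (1 : Q) ∈ S ∧ (∀ a ∈ S, ∀ b ∈ S, a * b ∈ S) ∧
    ∀ a ∈ S, ∃ b ∈ S, a * b = 1 ∧ b * a = 1

/-- A normal subloop: `xN = Nx`, `(Nx)y = N(xy)`, `y(xN) = (yx)N`. -/
def IsNormalSubloop (S : Set Q) : Prop :=
  IsSubloop S ∧
  (∀ x : Q, {z | ∃ n ∈ S, z = x * n} = {z | ∃ n ∈ S, z = n * x}) ∧
  (∀ x y : Q, {z | ∃ n ∈ S, z = (n * x) * y} = {z | ∃ n ∈ S, z = n * (x * y)}) ∧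
  (∀ x y : Q, {z | ∃ n ∈ S, z = y * (x * n)} = {z | ∃ n ∈ S, z = (y * x) * n})

/-- A loop is simple if its only normal subloops are trivial. -/
def IsSimpleLoop (Q : Type*) [Mul Q] [One Q] : Prop :=
  ∀ S : Set Q, IsNormalSubloop S → S = {1} ∨ S = Set.univ

/-- The centre of a loop: elements commuting and associating with everything. -/
def loopCentre (Q : Type*) [Mul Q] : Set Q :=
  {a | ∀ x y : Q, a * x = x * a ∧ (a * x) * y = a * (x * y) ∧
    (x * a) * y = x * (a * y) ∧ (x * y) * a = x * (y * a)}

end LoopDefs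

instance : Fact (Nat.Prime 5) := ⟨by norm_num⟩

/-! Over `GF(5)` the scalar `-1 = 2²` is a square, so `x = (2, 0; 0, -2)` lies in `M*(F)` with
`x² = -1`. If `M*(F) = Z·H`, then `x = ±h` with `h ∈ H`, hence `-1 = x² = h² ∈ H`, contradicting
`H ∩ Z = {1}`. -/

namespace Zorn

variable {F : Type*} [Field F]

theorem one_mul (x : Zorn F) : 1 * x = x := by
  refine Zorn.ext ?_ ?_ ?_ ?_
  · simp [dot3]
  · funext i; fin_cases i <;> simp [cross3]
  · funext i; fin_cases i <;> simp [cross3]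
  · simp [dot3]

theorem neg_mul_neg (x y : Zorn F) : (-x) * (-y) = x * y := by
  rw [neg_mul', mul_neg', neg_neg']

end Zorn

namespace Mstar

variable {F : Type*} [Field F]

theorem one_mul (x : Mstar F) : 1 * x = x :=
  Subtype.ext (Zorn.one_mul x.1)

theorem neg_one_mul (x : Mstar F) : (-1) * x = -x :=
  Subtype.ext (by simp only [coe_mul, coe_neg, coe_one, Zorn.neg_mul', Zorn.one_mul])

theorem neg_mul_neg (x y : Mstar F) : (-x) * (-y) = x * y :=
  Subtype.ext (Zorn.neg_mul_neg x.1 y.1)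

theorem neg_one_ne_one (hF : (-1 : F) ≠ 1) : (-1 : Mstar F) ≠ 1 := fun h =>
  hF (by simpa using congrArg (fun x : Mstar F => x.1.a) h)

theorem sign_mul_self {z h : Mstar F} (hz : z ∈ ({1, -1} : Set (Mstar F))) :
    (z * h) * (z * h) = h * h := by
  rcases hz with rfl | rfl
  · rw [one_mul]
  · rw [neg_one_mul, neg_mul_neg]

def sqrtNegOne (i : F) (hi : i * i = -1) : Mstar F :=
  ⟨⟨i, 0, 0, -i⟩, by simp [Zorn.norm, dot3, hi]⟩

theorem sqrtNegOne_mul_self (i : F) (hi : i * i = -1) :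
    sqrtNegOne i hi * sqrtNegOne i hi = -1 := by
  refine Subtype.ext ?_
  show (⟨i, 0, 0, -i⟩ : Zorn F) * ⟨i, 0, 0, -i⟩ = -1
  refine Zorn.ext ?_ ?_ ?_ ?_
  · simp [dot3, hi]
  · funext j; fin_cases j <;> simp [cross3]
  · funext j; fin_cases j <;> simp [cross3]
  · simp [dot3, hi]

theorem not_exists_direct_complement_of_mul_self_eq_neg_one (hF : (-1 : F) ≠ 1)
    (i : F) (hi : i * i = -1) :
    ¬ ∃ H : Set (Mstar F), IsSubloop H ∧ H ∩ {1, -1} = {1} ∧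
        {x | ∃ z ∈ ({1, -1} : Set (Mstar F)), ∃ h ∈ H, x = z * h} = Set.univ := by
  rintro ⟨H, hH, hInter, hSpan⟩
  obtain ⟨z, hz, h, hh, hx⟩ : sqrtNegOne i hi ∈ {x | ∃ z ∈ ({1, -1} : Set (Mstar F)),
      ∃ h ∈ H, x = z * h} := hSpan ▸ Set.mem_univ _
  have hneg : (-1 : Mstar F) ∈ H := by
    rw [← sqrtNegOne_mul_self i hi, hx, sign_mul_self hz]
    exact hH.2.1 h hh h hh
  have : (-1 : Mstar F) ∈ ({1} : Set (Mstar F)) := hInter ▸ ⟨hneg, Or.inr rfl⟩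
  exact neg_one_ne_one hF this

end Mstar

/-- for `F = GF(5)`, the centre `Z = {1, -1}` of `M*(F)` has no
direct complement: there is no normal subloop `H` with `H ∩ Z = {1}` and
`Z·H = M*(F)`. -/
theorem centre_mstar_zmod5_has_no_direct_complement :
    ¬ ∃ H : Set (Mstar (ZMod 5)), IsNormalSubloop H ∧
        H ∩ {1, -1} = {1} ∧
        {x | ∃ z ∈ ({1, -1} : Set (Mstar (ZMod 5))), ∃ h ∈ H, x = z * h} = Set.univ := by
  rintro ⟨H, hN, hInter, hSpan⟩
  exact Mstar.not_exists_direct_complement_of_mul_self_eq_neg_one (by decide) 2 (by decide)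
    ⟨H, hN.1, hInter, hSpan⟩

end Paper
end

section
/- Let Δ be a prime field and let P be its algebraic closure. The assignment F ↦ M(F) is an inclusion-preserving bijection (an order isomorphism of lattices) from the set of Galois extensions F of Δ contained in P, ordered by inclusion, onto the set of subloops of M(P) that are nonassociative simple Moufang loops of the form M(F), ordered by inclusion; under this bijection, intersections of fields correspond to intersections of loops. -/
namespace Paper

/-- A prime field: `ℚ` or `𝔽ₚ`. -/
def IsPrimeField (Δ : Type*) [Field Δ] : Prop :=
  Nonempty (Δ ≃+* ℚ) ∨ ∃ p : ℕ, p.Prime ∧ Nonempty (Δ ≃+* ZMod p)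


/-- The elements of the Zorn algebra all of whose matrix components lie in
the subfield `K`. -/
def ZornIn {F : Type*} [Field F] (K : Subfield F) : Set (Zorn F) :=
  {x | x.a ∈ K ∧ x.d ∈ K ∧ (∀ i, x.u i ∈ K) ∧ (∀ i, x.v i ∈ K)}

/-- The copy of the Paige loop `M(K)` inside `M(F)`, for a subfield `K` of `F`. -/
def PaigeSet {F : Type*} [Field F] (K : Subfield F) : Set (Paige F) :=
  {q | ∃ x : Mstar F, x.1 ∈ ZornIn K ∧ ⟦x⟧ = q}

/-! The loop `M(K)` sits in `M(P)` as the classes of norm-one Zorn matrices with entries in `K`.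
It is closed under products, and the inverse of a class is the class of the conjugate matrix
since `x x̄ = n(x) · 1`. As `K` is closed under negation, a class `±x` lies in `M(K)` exactly
when `x` has entries in `K`; the unipotent matrix `(1, (t,0,0); 0, 1)` therefore lies in `M(K)`
iff `t ∈ K`. So `K ↦ M(K)` is an order embedding of subfields of `P` that commutes with
intersections, and restricting it to the Galois extensions of `Δ` gives the bijection. -/

namespace Zorn

variable {F : Type*} [Field F]

def conj (x : Zorn F) : Zorn F := ⟨x.d, -x.u, -x.v, x.a⟩

theorem norm_conj (x : Zorn F) : norm (conj x) = norm x := by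
  simp only [norm, conj, dot3, Pi.neg_apply]
  ring

theorem mul_conj (x : Zorn F) : x * conj x = ⟨norm x, 0, 0, norm x⟩ := by
  ext i <;> (try fin_cases i) <;> simp [conj, norm, dot3, cross3] <;> ring

theorem conj_mul (x : Zorn F) : conj x * x = ⟨norm x, 0, 0, norm x⟩ := by
  ext i <;> (try fin_cases i) <;> simp [conj, norm, dot3, cross3] <;> ring

end Zorn

section ZornIn

variable {F : Type*} [Field F] {K K' : Subfield F} {x y : Zorn F}

theorem dot3_mem {u v : Fin 3 → F} (hu : ∀ i, u i ∈ K) (hv : ∀ i, v i ∈ K) :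
    dot3 u v ∈ K :=
  add_mem (add_mem (mul_mem (hu 0) (hv 0)) (mul_mem (hu 1) (hv 1))) (mul_mem (hu 2) (hv 2))

theorem cross3_mem {u v : Fin 3 → F} (hu : ∀ i, u i ∈ K) (hv : ∀ i, v i ∈ K) (i : Fin 3) :
    cross3 u v i ∈ K := by
  fin_cases i <;> exact sub_mem (mul_mem (hu _) (hv _)) (mul_mem (hu _) (hv _))

theorem one_mem_zornIn : (1 : Zorn F) ∈ ZornIn K :=
  ⟨one_mem K, one_mem K, fun _ => zero_mem K, fun _ => zero_mem K⟩

theorem mul_mem_zornIn (hx : x ∈ ZornIn K) (hy : y ∈ ZornIn K) : x * y ∈ ZornIn K := by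
  obtain ⟨hxa, hxd, hxu, hxv⟩ := hx
  obtain ⟨hya, hyd, hyu, hyv⟩ := hy
  exact ⟨add_mem (mul_mem hxa hya) (dot3_mem hxu hyv),
    add_mem (mul_mem hxd hyd) (dot3_mem hxv hyu),
    fun i => sub_mem (add_mem (mul_mem hxa (hyu i)) (mul_mem hyd (hxu i)))
      (cross3_mem hxv hyv i),
    fun i => add_mem (add_mem (mul_mem hya (hxv i)) (mul_mem hxd (hyv i)))
      (cross3_mem hxu hyu i)⟩

theorem neg_mem_zornIn (hx : x ∈ ZornIn K) : -x ∈ ZornIn K := by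
  obtain ⟨ha, hd, hu, hv⟩ := hx
  exact ⟨neg_mem ha, neg_mem hd, fun i => neg_mem (hu i), fun i => neg_mem (hv i)⟩

theorem conj_mem_zornIn (hx : x ∈ ZornIn K) : Zorn.conj x ∈ ZornIn K := by
  obtain ⟨ha, hd, hu, hv⟩ := hx
  exact ⟨hd, ha, fun i => neg_mem (hu i), fun i => neg_mem (hv i)⟩

theorem zornIn_mono (h : K ≤ K') : ZornIn K ⊆ ZornIn K' :=
  fun _ ⟨ha, hd, hu, hv⟩ => ⟨h ha, h hd, fun i => h (hu i), fun i => h (hv i)⟩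

theorem zornIn_inf : ZornIn (K ⊓ K') = ZornIn K ∩ ZornIn K' := by
  ext x
  simp only [ZornIn, Set.mem_ofPred_eq, Set.mem_inter_iff, Subfield.mem_inf, forall_and]
  tauto

end ZornIn

namespace Mstar

variable {F : Type*} [Field F]

def conj (x : Mstar F) : Mstar F := ⟨Zorn.conj x.1, by rw [Zorn.norm_conj, x.2]⟩

theorem mul_conj (x : Mstar F) : x * x.conj = 1 := by
  apply Subtype.ext
  rw [coe_mul, conj, Zorn.mul_conj, x.2]
  rfl

theorem conj_mul (x : Mstar F) : x.conj * x = 1 := by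
  apply Subtype.ext
  rw [coe_mul, conj, Zorn.conj_mul, x.2]
  rfl

def unipotent (t : F) : Mstar F := ⟨⟨1, ![t, 0, 0], 0, 1⟩, by simp [Zorn.norm, dot3]⟩

theorem unipotent_mem_zornIn_iff {K : Subfield F} {t : F} :
    (unipotent t).1 ∈ ZornIn K ↔ t ∈ K := by
  refine ⟨fun h => h.2.2.1 0,
    fun ht => ⟨one_mem K, one_mem K, fun i => ?_, fun _ => zero_mem K⟩⟩
  fin_cases i
  exacts [ht, zero_mem K, zero_mem K]

end Mstar

section PaigeSet

variable {F : Type*} [Field F] {K K' : Subfield F}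

theorem mk_mem_paigeSet_iff {x : Mstar F} :
    (⟦x⟧ : Paige F) ∈ PaigeSet K ↔ x.1 ∈ ZornIn K := by
  refine ⟨fun ⟨y, hy, hyx⟩ => ?_, fun hx => ⟨x, hx, rfl⟩⟩
  rcases Quotient.exact hyx with h | h
  · rwa [← h]
  · rw [← Zorn.neg_neg' x.1, ← h]
    exact neg_mem_zornIn hy

theorem isSubloop_paigeSet (K : Subfield F) : IsSubloop (PaigeSet K) := by
  refine ⟨⟨1, one_mem_zornIn, rfl⟩, ?_, ?_⟩
  · rintro _ ⟨x, hx, rfl⟩ _ ⟨y, hy, rfl⟩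
    exact ⟨x * y, mul_mem_zornIn hx hy, rfl⟩
  · rintro _ ⟨x, hx, rfl⟩
    exact ⟨⟦x.conj⟧, ⟨x.conj, conj_mem_zornIn hx, rfl⟩,
      congrArg (⟦·⟧) x.mul_conj, congrArg (⟦·⟧) x.conj_mul⟩

theorem paigeSet_subset_paigeSet_iff : PaigeSet K ⊆ PaigeSet K' ↔ K ≤ K' := by
  refine ⟨fun h t ht => ?_, fun h _ ⟨x, hx, hq⟩ => ⟨x, zornIn_mono h hx, hq⟩⟩
  have hK : (⟦Mstar.unipotent t⟧ : Paige F) ∈ PaigeSet K :=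
    mk_mem_paigeSet_iff.2 (Mstar.unipotent_mem_zornIn_iff.2 ht)
  exact Mstar.unipotent_mem_zornIn_iff.1 (mk_mem_paigeSet_iff.1 (h hK))

theorem paigeSet_injective : Function.Injective (PaigeSet : Subfield F → Set (Paige F)) :=
  fun _ _ h => le_antisymm (paigeSet_subset_paigeSet_iff.1 h.le)
    (paigeSet_subset_paigeSet_iff.1 h.ge)

theorem paigeSet_inf : PaigeSet (K ⊓ K') = PaigeSet K ∩ PaigeSet K' := by
  ext q
  induction q using Quotient.inductionOn
  simp only [Set.mem_inter_iff, mk_mem_paigeSet_iff, zornIn_inf]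

end PaigeSet

theorem paige_lattice_order_iso_general (Δ : Type) [Field Δ]
    (P : Type) [Field P] [Algebra Δ P] :
    (∃ e : {F : IntermediateField Δ P // IsGalois Δ F} ≃
        {S : Set (Paige P) // IsSubloop S ∧
          ∃ F : IntermediateField Δ P, IsGalois Δ F ∧ S = PaigeSet F.toSubfield},
      (∀ F, ((e F : Set (Paige P))) = PaigeSet (F : IntermediateField Δ P).toSubfield) ∧
      (∀ F F' : {F : IntermediateField Δ P // IsGalois Δ F},
        (F : IntermediateField Δ P) ≤ F' ↔ (e F : Set (Paige P)) ⊆ (e F' : Set (Paige P)))) ∧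
    (∀ F F' : IntermediateField Δ P, IsGalois Δ F → IsGalois Δ F' →
      PaigeSet (F ⊓ F').toSubfield = PaigeSet F.toSubfield ∩ PaigeSet F'.toSubfield) := by
  let M (F : {F : IntermediateField Δ P // IsGalois Δ F}) :
      {S : Set (Paige P) // IsSubloop S ∧
        ∃ F : IntermediateField Δ P, IsGalois Δ F ∧ S = PaigeSet F.toSubfield} :=
    ⟨PaigeSet F.1.toSubfield, isSubloop_paigeSet _, F.1, F.2, rfl⟩
  have hM_injective : Function.Injective M := fun _ _ h =>
    Subtype.ext <| IntermediateField.toSubfield_injective <|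
      paigeSet_injective (congrArg Subtype.val h)
  have hM_surjective : Function.Surjective M := by
    rintro ⟨S, -, F, hF, rfl⟩
    exact ⟨⟨F, hF⟩, rfl⟩
  refine ⟨⟨Equiv.ofBijective M ⟨hM_injective, hM_surjective⟩, fun _ => rfl,
    fun F F' => ?_⟩,
    fun F F' _ _ => paigeSet_inf (K := F.toSubfield) (K' := F'.toSubfield)⟩
  exact (paigeSet_subset_paigeSet_iff (K := F.1.toSubfield) (K' := F'.1.toSubfield)).symm

/-- `F ↦ M(F)` is an inclusion-preserving bijection from the Galois
extensions of the prime field `Δ` inside its algebraic closure `P` onto the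
subloops of `M(P)` of the form `M(F)`; intersections of fields correspond to
intersections of loops. -/
theorem paige_lattice_order_iso (Δ : Type) [Field Δ] (hΔ : IsPrimeField Δ)
    (P : Type) [Field P] [Algebra Δ P] [IsAlgClosure Δ P] :
    (∃ e : {F : IntermediateField Δ P // IsGalois Δ F} ≃
        {S : Set (Paige P) // IsSubloop S ∧
          ∃ F : IntermediateField Δ P, IsGalois Δ F ∧ S = PaigeSet F.toSubfield},
      (∀ F, ((e F : Set (Paige P))) = PaigeSet (F : IntermediateField Δ P).toSubfield) ∧
      (∀ F F' : {F : IntermediateField Δ P // IsGalois Δ F},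
        (F : IntermediateField Δ P) ≤ F' ↔ (e F : Set (Paige P)) ⊆ (e F' : Set (Paige P)))) ∧
    (∀ F F' : IntermediateField Δ P, IsGalois Δ F → IsGalois Δ F' →
      PaigeSet (F ⊓ F').toSubfield = PaigeSet F.toSubfield ∩ PaigeSet F'.toSubfield) :=
  paige_lattice_order_iso_general Δ P

end Paper
end

section
/- Let Δ be a prime field and P its algebraic closure. The lattice of Galois extensions of Δ contained in P (ordered by inclusion, with meet the intersection of fields and join the compositum, i.e., the smallest subfield containing both) is a modular (Dedekind) lattice: for Galois extensions X, Y, Z of Δ in P with Y ⊆ X, one has X ∩ (Y ⊔ Z) = Y ⊔ (X ∩ Z). -/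
theorem Subgroup.sup_inf_assoc_of_le_of_normal {G : Type*} [Group G] {N : Subgroup G} [N.Normal]
    (K : Subgroup G) {H : Subgroup G} (h : N ≤ H) : (N ⊔ K) ⊓ H = N ⊔ K ⊓ H := by
  apply SetLike.ext'
  rw [Subgroup.coe_inf, Subgroup.normal_mul, Subgroup.normal_mul, Subgroup.mul_inf_assoc _ _ _ h]

theorem Subgroup.isClosed_sup_of_normal {G : Type*} [Group G] [TopologicalSpace G]
    [ContinuousMul G] [CompactSpace G] [T2Space G] {N H : Subgroup G} [N.Normal]
    (hN : IsClosed (N : Set G)) (hH : IsClosed (H : Set G)) :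
    IsClosed ((N ⊔ H : Subgroup G) : Set G) := by
  rw [Subgroup.normal_mul]
  exact (hN.isCompact.mul hH.isCompact).isClosed

namespace InfiniteGalois

open IntermediateField

variable {k K : Type*} [Field k] [Field K] [Algebra k K] [IsGalois k K]

theorem fixingSubgroup_inf (X Z : IntermediateField k K) [IsGalois k X] :
    (X ⊓ Z).fixingSubgroup = X.fixingSubgroup ⊔ Z.fixingSubgroup := by
  refine le_antisymm ?_ (sup_le (fixingSubgroup_le inf_le_left) (fixingSubgroup_le inf_le_right))
  let H : ClosedSubgroup Gal(K/k) :=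
    ⟨X.fixingSubgroup ⊔ Z.fixingSubgroup,
      Subgroup.isClosed_sup_of_normal (fixingSubgroup_isClosed X) (fixingSubgroup_isClosed Z)⟩
  have hH : fixedField H.toSubgroup ≤ X ⊓ Z := le_inf
    (fixedField_fixingSubgroup X ▸ fixedField_antitone le_sup_left)
    (fixedField_fixingSubgroup Z ▸ fixedField_antitone le_sup_right)
  exact (fixingSubgroup_le hH).trans (fixingSubgroup_fixedField H).le

theorem inf_sup_eq_sup_inf_of_le {X Y : IntermediateField k K} [IsGalois k X]
    (Z : IntermediateField k K) (hYX : Y ≤ X) : X ⊓ (Y ⊔ Z) = Y ⊔ (X ⊓ Z) := by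
  rw [← fixedField_fixingSubgroup (X ⊓ (Y ⊔ Z)), ← fixedField_fixingSubgroup (Y ⊔ (X ⊓ Z))]
  congr 1
  rw [fixingSubgroup_inf, fixingSubgroup_sup, fixingSubgroup_sup, fixingSubgroup_inf,
    inf_comm Y.fixingSubgroup, ← Subgroup.sup_inf_assoc_of_le_of_normal _ (fixingSubgroup_le hYX),
    inf_comm]

end InfiniteGalois

namespace Paper

theorem IsPrimeField.perfectField {Δ : Type*} [Field Δ] (hΔ : IsPrimeField Δ) :
    PerfectField Δ := by
  rcases hΔ with ⟨⟨e⟩⟩ | ⟨p, hp, ⟨e⟩⟩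
  · have : CharZero Δ := e.toRingHom.charZero
    infer_instance
  · have : NeZero p := ⟨hp.ne_zero⟩
    have : Finite Δ := .of_equiv _ e.symm.toEquiv
    infer_instance

theorem galois_extensions_lattice_modular_general (Δ : Type*) [Field Δ] (hΔ : IsPrimeField Δ)
    (P : Type*) [Field P] [Algebra Δ P] [IsAlgClosure Δ P]
    (X Y Z : IntermediateField Δ P)
    [IsGalois Δ X]
    (hYX : Y ≤ X) :
    X ⊓ (Y ⊔ Z) = Y ⊔ (X ⊓ Z) := by
  have : PerfectField Δ := hΔ.perfectField
  have : IsGalois Δ P := ⟨⟩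
  exact InfiniteGalois.inf_sup_eq_sup_inf_of_le Z hYX

/-- the lattice of Galois extensions of a prime field `Δ` inside its
algebraic closure `P` is modular: if `Y ⊆ X` then `X ⊓ (Y ⊔ Z) = Y ⊔ (X ⊓ Z)`. -/
theorem galois_extensions_lattice_modular (Δ : Type*) [Field Δ] (hΔ : IsPrimeField Δ)
    (P : Type*) [Field P] [Algebra Δ P] [IsAlgClosure Δ P]
    (X Y Z : IntermediateField Δ P)
    [IsGalois Δ X] [IsGalois Δ Y] [IsGalois Δ Z]
    (hYX : Y ≤ X) :
    X ⊓ (Y ⊔ Z) = Y ⊔ (X ⊓ Z) :=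
  galois_extensions_lattice_modular_general Δ hΔ P X Y Z hYX

end Paper
end
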